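/- Let K(m) = m·N + Δ(m) (N SPSD with simple zero eigenvalue, unit kernel vector e, Δ(m) = Δ^∞ + O(m⁻¹), η := eᵀΔ^∞e > 0), and let D(m) = D^∞ + O(m⁻¹), B(m) = B^∞ + O(m⁻¹) be families of matrices of compatible sizes. Then the Schur complement S(m) := D(m) − B(m) K(m)^{-1} B(m)ᵀ satisfies S(m) = D^∞ − (B^∞ e) η^{-1} (eᵀ B^{∞ᵀ}) + O(m⁻¹); in particular, the limit S^∞ of S(m) is a rank-one perturbation of D^∞. -/

import Mathlib

/-!
With `P = e eᵀ`, the resolvent behaves like `K(m)⁻¹ = η⁻¹ P + O(m⁻¹)`. Since `N` is symmetric with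
kernel `ℝ e`, its range is `e^⊥`, so `N Y = 1 - η⁻¹ Δ^∞ P` is solvable (the right-hand side is
annihilated by `eᵀ` precisely because `η = eᵀ Δ^∞ e`). For `X(m) = η⁻¹ P + m⁻¹ Y` this gives
`K(m) X(m) = 1 + O(m⁻¹)`, hence `K(m)⁻¹ = X(m) (K(m) X(m))⁻¹ = η⁻¹ P + O(m⁻¹)`. Inserting this
into `D - B K⁻¹ Bᵀ` yields the limit `D^∞ - η⁻¹ (B^∞ e)(B^∞ e)ᵀ`, a rank-one perturbation of `D^∞`.
-/

open Matrix Asymptotics Filter Topology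
open scoped Matrix.Norms.L2Operator

theorem isBigO_inv_atTop_iff {E : Type*} [SeminormedAddCommGroup E] {f : ℝ → E} :
    f =O[atTop] (fun m => m⁻¹) ↔ ∃ C M : ℝ, ∀ m ≥ M, ‖f m‖ ≤ C / m := by
  simp only [isBigO_iff, eventually_atTop]
  refine ⟨fun ⟨C, M, hM⟩ => ⟨C, max M 1, fun m hm => ?_⟩,
    fun ⟨C, M, hM⟩ => ⟨C, max M 1, fun m hm => ?_⟩⟩ <;>
  simpa [abs_of_nonneg (zero_le_one.trans (le_of_max_le_right hm)), div_eq_mul_inv] using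
    hM m (le_of_max_le_left hm)

namespace Matrix

section Algebra

variable {ι κ K : Type*} [Fintype ι] [DecidableEq ι] [Field K]

theorem inv_eq_mul_ringInverse_mul {R : Type*} [CommRing R] {A B : Matrix ι ι R} (h : IsUnit (A * B)) :
    A⁻¹ = B * Ring.inverse (A * B) :=
  inv_eq_right_inv (by rw [← Matrix.mul_assoc, Ring.mul_inverse_cancel _ h])

theorem exists_mul_eq_of_vecMul_eq_zero {N : Matrix ι ι K} {e : ι → K} (hN : N.IsSymm)
    (he : e ⬝ᵥ e = 1) (hker : N *ᵥ e = 0) (hsimple : ∀ x, N *ᵥ x = 0 → ∃ c : K, x = c • e)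
    {Z : Matrix ι κ K} (hZ : e ᵥ* Z = 0) : ∃ Y : Matrix ι κ K, N * Y = Z := by
  set G := N + vecMulVec e e
  have heN : e ᵥ* N = 0 := by rw [← hN.eq, vecMul_transpose, hker]
  have heG : e ᵥ* G = e := by simp [G, vecMul_add, heN, vecMul_vecMulVec, he]
  have hG : IsUnit G.det := by
    refine (isUnit_iff_isUnit_det G).mp <| mulVec_injective_iff_isUnit.mp fun x y hxy =>
      sub_eq_zero.mp ?_
    set z := x - y
    have hGz : G *ᵥ z = 0 := by rw [mulVec_sub, hxy, sub_self]
    have hez : e ⬝ᵥ z = 0 := by rw [← heG, ← dotProduct_mulVec, hGz, dotProduct_zero]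
    have hNz : N *ᵥ z = 0 := by simpa [G, add_mulVec, vecMulVec_mulVec, hez] using hGz
    obtain ⟨c, hc⟩ := hsimple z hNz
    rw [hc, dotProduct_smul, he, smul_eq_mul, mul_one] at hez
    rw [hc, hez, zero_smul]
  have heGinv : e ᵥ* G⁻¹ = e := by
    conv_lhs => rw [← heG]
    rw [vecMul_vecMul, mul_nonsing_inv _ hG, vecMul_one]
  refine ⟨G⁻¹ * Z, ?_⟩
  have hNG : N = G - vecMulVec e e := by simp [G]
  rw [← Matrix.mul_assoc, hNG, Matrix.sub_mul, mul_nonsing_inv _ hG, vecMulVec_mul, heGinv,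
    Matrix.sub_mul, Matrix.one_mul, vecMulVec_mul, hZ]
  ext i j
  simp [vecMulVec_apply]

end Algebra

section Asymptotics

variable {α 𝕜 ι κ μ : Type*} [RCLike 𝕜] [Fintype ι] [Fintype κ] [Fintype μ] {l : Filter α}

theorem l2_opNorm_transpose [TrivialStar 𝕜] [DecidableEq ι] [DecidableEq κ]
    (A : Matrix ι κ 𝕜) : ‖Aᵀ‖ = ‖A‖ := by
  rw [← conjTranspose_eq_transpose_of_trivial, l2_opNorm_conjTranspose]

variable [DecidableEq κ] [DecidableEq μ]

theorem isBigO_mul {A : α → Matrix ι κ 𝕜} {B : α → Matrix κ μ 𝕜} {f g : α → ℝ}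
    (hA : A =O[l] f) (hB : B =O[l] g) : (fun x => A x * B x) =O[l] fun x => f x * g x :=
  (isBigO_of_le l fun x => (l2_opNorm_mul (A x) (B x)).trans (le_abs_self _)).trans
    (hA.norm_left.mul hB.norm_left)

theorem isBigO_mul_sub_mul {A : α → Matrix ι κ 𝕜} {B : α → Matrix κ μ 𝕜} {A₀ : Matrix ι κ 𝕜}
    {B₀ : Matrix κ μ 𝕜} {g : α → ℝ} (hg : g =O[l] fun _ => (1 : ℝ))
    (hA : (fun x => A x - A₀) =O[l] g) (hB : (fun x => B x - B₀) =O[l] g) :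
    (fun x => A x * B x - A₀ * B₀) =O[l] g := by
  have hB₁ : B =O[l] fun _ => (1 : ℝ) := by
    simpa using (hB.trans hg).add (isBigO_const_const B₀ one_ne_zero l)
  have h₁ : (fun x => (A x - A₀) * B x) =O[l] g := by simpa using isBigO_mul hA hB₁
  have h₂ : (fun x => A₀ * (B x - B₀)) =O[l] g := by
    simpa using isBigO_mul (isBigO_const_const A₀ one_ne_zero l) hB
  refine (h₁.add h₂).congr_left fun x => ?_
  simp only [Matrix.sub_mul, Matrix.mul_sub]
  abel

theorem isBigO_inv_sub_of_mul_sub_one {K X : α → Matrix κ κ 𝕜} {X₀ : Matrix κ κ 𝕜} {g : α → ℝ}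
    (hg : Tendsto g l (𝓝 0)) (hKX : (fun x => K x * X x - 1) =O[l] g)
    (hX : (fun x => X x - X₀) =O[l] g) : (fun x => (K x)⁻¹ - X₀) =O[l] g := by
  have hE : Tendsto (fun x => K x * X x - 1) l (𝓝 0) := hKX.trans_tendsto hg
  have hunit : ∀ᶠ x in l, IsUnit (K x * X x) := by
    have : Tendsto (fun x => K x * X x) l (𝓝 1) := by simpa using hE.add_const 1
    exact this.eventually (Units.isOpen.mem_nhds isUnit_one)
  have hR : (fun x => Ring.inverse (K x * X x) - 1) =O[l] g := by
    have := (NormedRing.inverse_add_norm_diff_first_order (1 : (Matrix κ κ 𝕜)ˣ)).comp_tendsto hE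
    exact (this.trans hKX.norm_left).congr_left fun x => by simp
  refine (isBigO_mul_sub_mul (hg.isBigO_one ℝ) hX hR).congr' ?_ .rfl
  filter_upwards [hunit] with x hx
  rw [mul_one, inv_eq_mul_ringInverse_mul hx]

end Asymptotics

theorem isBigO_inv_smul_add_sub_vecMulVec {ι : Type*} [Fintype ι] [DecidableEq ι]
    {N Δ₀ : Matrix ι ι ℝ} {Δ : ℝ → Matrix ι ι ℝ} {e : ι → ℝ} (hN : N.IsSymm) (he : e ⬝ᵥ e = 1)
    (hker : N *ᵥ e = 0) (hsimple : ∀ x, N *ᵥ x = 0 → ∃ c : ℝ, x = c • e)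
    (hη : e ⬝ᵥ Δ₀ *ᵥ e ≠ 0) (hΔ : (fun m => Δ m - Δ₀) =O[atTop] fun m => m⁻¹) :
    (fun m : ℝ => (m • N + Δ m)⁻¹ - (e ⬝ᵥ Δ₀ *ᵥ e)⁻¹ • vecMulVec e e) =O[atTop]
      fun m => m⁻¹ := by
  set η := e ⬝ᵥ Δ₀ *ᵥ e
  set P := vecMulVec e e
  have hNP : N * P = 0 := by
    ext i j
    simp [P, mul_vecMulVec, hker, vecMulVec_apply]
  have heΔP : e ᵥ* (Δ₀ * P) = η • e := by
    rw [← vecMul_vecMul, vecMul_vecMulVec, ← dotProduct_mulVec]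
  obtain ⟨Y, hY⟩ : ∃ Y : Matrix ι ι ℝ, N * Y = 1 - η⁻¹ • (Δ₀ * P) :=
    exists_mul_eq_of_vecMul_eq_zero hN he hker hsimple (by
      rw [vecMul_sub, vecMul_one, vecMul_smul, heΔP, smul_smul, inv_mul_cancel₀ hη, one_smul,
        sub_self])
  have hinv : Tendsto (fun m : ℝ => m⁻¹) atTop (𝓝 0) := tendsto_inv_atTop_zero
  have hΔ₁ : Δ =O[atTop] fun _ => (1 : ℝ) := by
    simpa using (hΔ.trans (hinv.isBigO_one ℝ)).add (isBigO_const_const Δ₀ one_ne_zero atTop)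
  refine isBigO_inv_sub_of_mul_sub_one (X := fun m => η⁻¹ • P + m⁻¹ • Y) hinv ?_ ?_
  · have hexpand : (fun m : ℝ => (Δ m - Δ₀) * (η⁻¹ • P) + m⁻¹ • (Δ m * Y)) =ᶠ[atTop]
        fun m => (m • N + Δ m) * (η⁻¹ • P + m⁻¹ • Y) - 1 := by
      filter_upwards [eventually_ne_atTop 0] with m hm
      simp only [Matrix.add_mul, Matrix.mul_add, Matrix.smul_mul, Matrix.mul_smul, hNP, hY,
        Matrix.sub_mul, smul_add, smul_smul, inv_mul_cancel₀ hm, one_smul, smul_zero]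
      module
    refine IsBigO.congr' ?_ hexpand .rfl
    refine IsBigO.add ?_ ?_
    · simpa using isBigO_mul hΔ (isBigO_const_const (η⁻¹ • P) one_ne_zero atTop)
    · simpa using (isBigO_refl (fun m : ℝ => m⁻¹) atTop).smul
        (isBigO_mul hΔ₁ (isBigO_const_const Y one_ne_zero atTop))
  · exact isBigO_of_le' (c := ‖Y‖) _ fun m => by simp [norm_smul, mul_comm]

end Matrix

theorem schur_complement_asymptotics_general {n p : ℕ}
    (N Δinf : Matrix (Fin n) (Fin n) ℝ) (Δ : ℝ → Matrix (Fin n) (Fin n) ℝ)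
    (hN : N.PosSemidef) (e : Fin n → ℝ) (he : e ⬝ᵥ e = 1)
    (hker : N.mulVec e = 0)
    (hsimple : ∀ x, N.mulVec x = 0 → ∃ c : ℝ, x = c • e)
    (hΔ : ∃ C M : ℝ, ∀ m ≥ M, ‖Δ m - Δinf‖ ≤ C / m)
    (K : ℝ → Matrix (Fin n) (Fin n) ℝ) (hK : ∀ m, K m = m • N + Δ m)
    (η : ℝ) (hη : η = e ⬝ᵥ Δinf.mulVec e) (hηpos : 0 < η)
    (B : ℝ → Matrix (Fin p) (Fin n) ℝ) (Binf : Matrix (Fin p) (Fin n) ℝ)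
    (hB : ∃ C M : ℝ, ∀ m ≥ M, ‖B m - Binf‖ ≤ C / m)
    (D : ℝ → Matrix (Fin p) (Fin p) ℝ) (Dinf : Matrix (Fin p) (Fin p) ℝ)
    (hD : ∃ C M : ℝ, ∀ m ≥ M, ‖D m - Dinf‖ ≤ C / m)
    (S : ℝ → Matrix (Fin p) (Fin p) ℝ)
    (hS : ∀ m, S m = D m - B m * (K m)⁻¹ * (B m)ᵀ)
    (Sinf : Matrix (Fin p) (Fin p) ℝ)
    (hSinf : Sinf = Dinf - η⁻¹ • Matrix.vecMulVec (Binf.mulVec e) (Binf.mulVec e)) :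
    (∃ C M : ℝ, ∀ m ≥ M, ‖S m - Sinf‖ ≤ C / m) ∧ (Dinf - Sinf).rank ≤ 1 := by
  subst hη
  have hinv : (fun m : ℝ => m⁻¹) =O[atTop] fun _ => (1 : ℝ) := tendsto_inv_atTop_zero.isBigO_one ℝ
  have hB' := isBigO_inv_atTop_iff.mpr hB
  have hBt : (fun m => (B m)ᵀ - Binfᵀ) =O[atTop] fun m => m⁻¹ :=
    (isBigO_of_le _ fun m => by rw [← transpose_sub, l2_opNorm_transpose]).trans hB'
  have hKinv := isBigO_inv_smul_add_sub_vecMulVec (isHermitian_iff_isSymm.mp hN.1) he hker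
    hsimple hηpos.ne' (isBigO_inv_atTop_iff.mpr hΔ)
  have hBKB := isBigO_mul_sub_mul hinv (isBigO_mul_sub_mul hinv hB' hKinv) hBt
  have hlim : Binf * ((e ⬝ᵥ Δinf *ᵥ e)⁻¹ • vecMulVec e e) * Binfᵀ =
      (e ⬝ᵥ Δinf *ᵥ e)⁻¹ • vecMulVec (Binf *ᵥ e) (Binf *ᵥ e) := by
    rw [Matrix.mul_smul, Matrix.smul_mul, mul_vecMulVec, vecMulVec_mul, vecMul_transpose]
  refine ⟨isBigO_inv_atTop_iff.mp <| ((isBigO_inv_atTop_iff.mpr hD).sub hBKB).congr_left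
    fun m => ?_, ?_⟩
  · rw [hS, hK, hSinf, hlim]
    abel
  · rw [hSinf, sub_sub_cancel, ← smul_vecMulVec]
    exact rank_vecMulVec_le _ _

theorem schur_complement_asymptotics {n p : ℕ}
    (N Δinf : Matrix (Fin n) (Fin n) ℝ) (Δ : ℝ → Matrix (Fin n) (Fin n) ℝ)
    (hN : N.PosSemidef) (e : Fin n → ℝ) (he : e ⬝ᵥ e = 1)
    (hker : N.mulVec e = 0)
    (hsimple : ∀ x, N.mulVec x = 0 → ∃ c : ℝ, x = c • e)
    (hΔsym : ∀ m, (Δ m).IsHermitian)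
    (hΔ : ∃ C M : ℝ, ∀ m ≥ M, ‖Δ m - Δinf‖ ≤ C / m)
    (K : ℝ → Matrix (Fin n) (Fin n) ℝ) (hK : ∀ m, K m = m • N + Δ m)
    (hinv : ∃ M₀ : ℝ, ∀ m ≥ M₀, IsUnit (K m).det)
    (η : ℝ) (hη : η = e ⬝ᵥ Δinf.mulVec e) (hηpos : 0 < η)
    (B : ℝ → Matrix (Fin p) (Fin n) ℝ) (Binf : Matrix (Fin p) (Fin n) ℝ)
    (hB : ∃ C M : ℝ, ∀ m ≥ M, ‖B m - Binf‖ ≤ C / m)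
    (D : ℝ → Matrix (Fin p) (Fin p) ℝ) (Dinf : Matrix (Fin p) (Fin p) ℝ)
    (hD : ∃ C M : ℝ, ∀ m ≥ M, ‖D m - Dinf‖ ≤ C / m)
    (S : ℝ → Matrix (Fin p) (Fin p) ℝ)
    (hS : ∀ m, S m = D m - B m * (K m)⁻¹ * (B m)ᵀ)
    (Sinf : Matrix (Fin p) (Fin p) ℝ)
    (hSinf : Sinf = Dinf - η⁻¹ • Matrix.vecMulVec (Binf.mulVec e) (Binf.mulVec e)) :
    (∃ C M : ℝ, ∀ m ≥ M, ‖S m - Sinf‖ ≤ C / m) ∧ (Dinf - Sinf).rank ≤ 1 :=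
  schur_complement_asymptotics_general N Δinf Δ hN e he hker hsimple hΔ K hK η hη hηpos B Binf hB D
    Dinf hD S hS Sinf hSinf
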